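/- Let X be an R-module such that every subquotient of X is stable for descending filtrations and stable for ascending filtrations. Suppose X = A₀ ⊇ A₁ ⊇ ⋯ is a descending chain of submodules with ⋂_i A_i = 0, and 0 = B₀ ⊆ B₁ ⊆ ⋯ is an ascending chain of submodules with ⋃_i B_i = X, such that every quotient A_i/A_{i+1} and every quotient B_{i+1}/B_i is zero or isomorphic to some S_j, and for every j ∈ J the sets {i : A_i/A_{i+1} ≅ S_j} and {i : B_{i+1}/B_i ≅ S_j} are finite. Then for every j ∈ J these two sets have the same cardinality; that is, the descending and the ascending ℤ-composition series of X have the same simple factors with the same multiplicities. -/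

import Mathlib

/-!
Fix `j`. Only finitely many factors of either filtration are isomorphic to `S j`, say
those of `A` below `N + 1` and those of `B` below `n`. Stability for ascending filtrations of
`X / A (N + 1)` lets us enlarge `n` until `B n + A (N + 1) = X`, and stability for descending
filtrations of `B n` gives `I ≥ N + 1` with `A I ∩ B n = 0`. Then `(A i ∩ B n)_{i ≤ I}` and
`(B i)_{i ≤ n}` are composition series of `B n`, with repetitions. By the second isomorphism
theorem each factor `(A i ∩ B n) / (A (i + 1) ∩ B n)` is either zero or isomorphic to
`A i / A (i + 1)`, and the latter happens whenever `A i ⊆ A (i + 1) + B n`, in particular for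
`i ≤ N`. So both multiplicities of `S j` are multiplicities in composition series of `B n`,
which agree by Jordan–Hölder.
-/

/-- The subquotient `A/B` of an ambient module. -/
abbrev quotSub {R X : Type*} [Ring R] [AddCommGroup X] [Module R X]
    (A B : Submodule R X) : Type _ :=
  ↥A ⧸ B.comap A.subtype

/-- A module `Y` is *stable for descending filtrations* if for any two chains of submodules
`Y = C₀ ⊇ C₁ ⊇ ⋯` and `Y = D₀ ⊇ D₁ ⊇ ⋯` with `⋂ᵢ Cᵢ = 0 = ⋂ᵢ Dᵢ`, and for each index `i`,
there exists `m` with `D_m ⊆ C_i`. -/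
def StableDesc (R Y : Type*) [Ring R] [AddCommGroup Y] [Module R Y] : Prop :=
  ∀ C D : ℕ → Submodule R Y, C 0 = ⊤ → D 0 = ⊤ →
    (∀ i, C (i + 1) ≤ C i) → (∀ i, D (i + 1) ≤ D i) →
    (⨅ i, C i) = ⊥ → (⨅ i, D i) = ⊥ →
    ∀ i, ∃ m, D m ≤ C i

/-- A module `Y` is *stable for ascending filtrations* if for any two chains
`0 = C₀ ⊆ C₁ ⊆ ⋯ ⊆ Y` and `0 = D₀ ⊆ D₁ ⊆ ⋯ ⊆ Y` with `⋃ᵢ Cᵢ = Y = ⋃ᵢ Dᵢ`, and for each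
index `i`, there exists `m` with `D_i ⊆ C_m`. -/
def StableAsc (R Y : Type*) [Ring R] [AddCommGroup Y] [Module R Y] : Prop :=
  ∀ C D : ℕ → Submodule R Y, C 0 = ⊥ → D 0 = ⊥ →
    (∀ i, C i ≤ C (i + 1)) → (∀ i, D i ≤ D (i + 1)) →
    (⨆ i, C i) = ⊤ → (⨆ i, D i) = ⊤ →
    ∀ i, ∃ m, D i ≤ C m

theorem CovBy.inf_le_of_not_le_sup {α : Type*} [Lattice α] {a b c : α} (h : a ⋖ b)
    (hb : ¬ b ≤ a ⊔ c) : b ⊓ c ≤ a := by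
  rcases h.eq_or_eq le_sup_left (sup_le h.le inf_le_left) with h' | h'
  · exact le_sup_right.trans h'.le
  · exact absurd (h'.symm.le.trans (sup_le_sup_left inf_le_right a)) hb

theorem WCovBy.inf_right {α : Type*} [Lattice α] [IsModularLattice α] {a b : α} (h : a ⩿ b)
    (c : α) : a ⊓ c ⩿ b ⊓ c := by
  rcases h.eq_or_covBy with rfl | h
  · exact WCovBy.refl _
  rcases h.eq_or_eq le_sup_left (sup_le h.le inf_le_left) with h' | h'
  · exact (le_antisymm (inf_le_inf_right c h.le)
      (le_inf (le_sup_right.trans h'.le) inf_le_right)).wcovBy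
  · have := inf_covBy_of_covBy_sup_left (h'.symm ▸ h : a ⋖ a ⊔ b ⊓ c)
    rw [← inf_assoc, inf_eq_left.2 h.le] at this
    exact this.wcovBy

section Subquotient

variable {R X : Type*} [Ring R] [AddCommGroup X] [Module R X] {P Q W : Submodule R X}

theorem subsingleton_quotSub_iff : Subsingleton (quotSub Q P) ↔ Q ≤ P := by
  rw [Submodule.Quotient.subsingleton_iff, Submodule.comap_subtype_eq_top]

theorem not_nonempty_quotSub_equiv_of_le {M : Type*} [AddCommGroup M] [Module R M]
    [Nontrivial M] (h : Q ≤ P) : ¬ Nonempty (quotSub Q P ≃ₗ[R] M) := by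
  have := subsingleton_quotSub_iff.2 h
  rintro ⟨e⟩
  exact not_subsingleton M e.symm.toEquiv.subsingleton

theorem wcovBy_of_quotSub {J : Type*} {S : J → Type*} [∀ j, AddCommGroup (S j)]
    [∀ j, Module R (S j)] (hS : ∀ j, IsSimpleModule R (S j)) (hPQ : P ≤ Q)
    (h : Subsingleton (quotSub Q P) ∨ ∃ j, Nonempty (quotSub Q P ≃ₗ[R] S j)) : P ⩿ Q := by
  rcases h with h | ⟨j, ⟨e⟩⟩
  · exact (le_antisymm hPQ (subsingleton_quotSub_iff.1 h)).wcovBy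
  · have := hS j
    exact ((covBy_iff_quot_is_simple hPQ).2 (IsSimpleModule.congr e)).wcovBy

theorem nonempty_quotSub_inf_equiv (hPQ : P ≤ Q) (hQ : Q ≤ P ⊔ W) :
    Nonempty (quotSub (Q ⊓ W) (P ⊓ W) ≃ₗ[R] quotSub Q P) := by
  have hsup : Q ⊓ W ⊔ P = Q := by
    rw [sup_comm, inf_comm, ← sup_inf_assoc_of_le W hPQ, inf_eq_right.2 hQ]
  have e := LinearMap.quotientInfEquivSupQuotient (Q ⊓ W) P
  rw [← Submodule.comap_inf, inf_right_comm, inf_eq_right.2 hPQ, hsup] at e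
  exact ⟨e⟩

theorem nonempty_quotSub_inf_equiv_iff {M : Type*} [AddCommGroup M] [Module R M]
    [Nontrivial M] (hPQ : P ⩿ Q) (hsup : Nonempty (quotSub Q P ≃ₗ[R] M) → Q ≤ P ⊔ W) :
    Nonempty (quotSub (Q ⊓ W) (P ⊓ W) ≃ₗ[R] M) ↔ Nonempty (quotSub Q P ≃ₗ[R] M) := by
  by_cases hQ : Q ≤ P ⊔ W
  · obtain ⟨e⟩ := nonempty_quotSub_inf_equiv hPQ.le hQ
    exact ⟨fun ⟨f⟩ => ⟨e.symm.trans f⟩, fun ⟨f⟩ => ⟨e.trans f⟩⟩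
  · have hQW : Q ⊓ W ≤ P ⊓ W := by
      rcases hPQ.eq_or_covBy with rfl | h
      · exact le_rfl
      · exact le_inf (h.inf_le_of_not_le_sup hQ) inf_le_right
    exact iff_of_false (not_nonempty_quotSub_equiv_of_le hQW) (mt hsup hQ)

end Subquotient

section Stability

variable {R : Type*} [Ring R]

theorem StableDesc.exists_eq_bot {Y : Type*} [AddCommGroup Y] [Module R Y]
    (hY : StableDesc R Y) {C : ℕ → Submodule R Y} (hC0 : C 0 = ⊤)
    (hC : ∀ i, C (i + 1) ≤ C i) (hCinf : (⨅ i, C i) = ⊥) : ∃ m, C m = ⊥ := by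
  let D : ℕ → Submodule R Y := fun i => if i = 0 then ⊤ else ⊥
  have hDinf : (⨅ i, D i) = ⊥ := eq_bot_iff.2 ((iInf_le D 1).trans (by simp [D]))
  obtain ⟨m, hm⟩ := hY D C rfl hC0 (fun i => by simp [D]) hC hDinf hCinf 1
  exact ⟨m, eq_bot_iff.2 (by simpa [D] using hm)⟩

theorem StableAsc.exists_eq_top {Y : Type*} [AddCommGroup Y] [Module R Y]
    (hY : StableAsc R Y) {C : ℕ → Submodule R Y} (hC0 : C 0 = ⊥)
    (hC : ∀ i, C i ≤ C (i + 1)) (hCsup : (⨆ i, C i) = ⊤) : ∃ m, C m = ⊤ := by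
  let D : ℕ → Submodule R Y := fun i => if i = 0 then ⊥ else ⊤
  have hDsup : (⨆ i, D i) = ⊤ := eq_top_iff.2 ((by simp [D] : ⊤ ≤ D 1).trans (le_iSup D 1))
  obtain ⟨m, hm⟩ := hY C D hC0 rfl hC (fun i => by simp [D]) hCsup hDsup 1
  exact ⟨m, eq_top_iff.2 (by simpa [D] using hm)⟩

variable {X : Type*} [AddCommGroup X] [Module R X]

theorem exists_inf_eq_bot_of_stableDesc {A : ℕ → Submodule R X} (hA0 : A 0 = ⊤)
    (hA : ∀ i, A (i + 1) ≤ A i) (hAinf : (⨅ i, A i) = ⊥) {W : Submodule R X}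
    (hW : StableDesc R (quotSub W ⊥)) : ∃ m, A m ⊓ W = ⊥ := by
  let ψ : quotSub W ⊥ →ₗ[R] X :=
    W.subtype ∘ₗ (Submodule.quotEquivOfEqBot _ (by simp)).toLinearMap
  have hψ : LinearMap.range ψ = W := by
    rw [LinearMap.range_comp_of_range_eq_top _ (LinearEquiv.range _), Submodule.range_subtype]
  have hψ' : LinearMap.ker ψ = ⊥ :=
    LinearMap.ker_eq_bot.2 (W.injective_subtype.comp (LinearEquiv.injective _))
  obtain ⟨m, hm⟩ := hW.exists_eq_bot (C := fun i => (A i).comap ψ) (by simp [hA0])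
    (fun i => Submodule.comap_mono (hA i))
    (by rw [← Submodule.comap_iInf, hAinf]; exact hψ')
  refine ⟨m, ?_⟩
  rw [← hψ, inf_comm, ← Submodule.map_comap_eq, hm, Submodule.map_bot]

theorem exists_sup_eq_top_of_stableAsc {B : ℕ → Submodule R X} (hB0 : B 0 = ⊥)
    (hB : ∀ i, B i ≤ B (i + 1)) (hBsup : (⨆ i, B i) = ⊤) {V : Submodule R X}
    (hV : StableAsc R (quotSub ⊤ V)) : ∃ m, B m ⊔ V = ⊤ := by
  let φ : X →ₗ[R] quotSub ⊤ V := Submodule.mkQ _ ∘ₗ Submodule.topEquiv.symm.toLinearMap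
  have hφ : LinearMap.ker φ = V := by
    ext x
    simp [φ]
  have hφ' : LinearMap.range φ = ⊤ := by simp [φ, LinearMap.range_comp]
  obtain ⟨m, hm⟩ := hV.exists_eq_top (C := fun i => (B i).map φ) (by simp [hB0])
    (fun i => Submodule.map_mono (hB i))
    (by rw [← Submodule.map_iSup, hBsup, Submodule.map_top, hφ'])
  refine ⟨m, ?_⟩
  rw [← hφ, ← Submodule.comap_map_eq, hm, Submodule.comap_top]

end Stability

theorem Set.ncard_setOf_eq_sum_range {p : ℕ → Prop} [DecidablePred p] {L : ℕ}
    (h : ∀ i, p i → i < L) :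
    {i | p i}.ncard = ∑ i ∈ Finset.range L, if p i then 1 else 0 := by
  rw [← Finset.card_filter, ← Set.ncard_coe_finset]
  congr 1
  ext i
  simpa using fun hi => h i hi

namespace CompositionSeries

variable {R X : Type*} [Ring R] [AddCommGroup X] [Module R X]
  (M : Type*) [AddCommGroup M] [Module R M]

open Classical in
noncomputable def factorCount (s : CompositionSeries (Submodule R X)) : ℕ :=
  ∑ i : Fin s.length, if Nonempty (quotSub (s i.succ) (s i.castSucc) ≃ₗ[R] M) then 1 else 0

open Classical in
theorem factorCount_snoc (s : CompositionSeries (Submodule R X)) (x : Submodule R X)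
    (h : JordanHolderLattice.IsMaximal s.last x) :
    factorCount M (s.snoc x h) =
      factorCount M s + if Nonempty (quotSub x s.last ≃ₗ[R] M) then 1 else 0 := by
  -- `rw` cannot be used below: the entries of `s.snoc x h` are indexed by
  -- `Fin ((s.snoc x h).length + 1)`, which is only definitionally `Fin (s.length + 2)`.
  refine (Fin.sum_univ_castSucc (n := s.length) _).trans (congr_arg₂ _ ?_ ?_)
  · refine Finset.sum_congr rfl fun i _ => ?_
    have h₁ : s.snoc x h i.castSucc.succ = s i.succ := RelSeries.snoc_castSucc s x h i.succ
    have h₂ : s.snoc x h i.castSucc.castSucc = s i.castSucc := RelSeries.snoc_castSucc s x h _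
    exact congrArg₂ (fun P Q => if Nonempty (quotSub P Q ≃ₗ[R] M) then 1 else 0) h₁ h₂
  · have h₁ : s.snoc x h (Fin.last s.length).succ = x := RelSeries.last_snoc' s x h
    have h₂ : s.snoc x h (Fin.last s.length).castSucc = s.last := RelSeries.snoc_castSucc s x h _
    exact congrArg₂ (fun P Q => if Nonempty (quotSub P Q ≃ₗ[R] M) then 1 else 0) h₁ h₂

open Classical in
theorem Equivalent.factorCount_eq {s t : CompositionSeries (Submodule R X)}
    (h : s.Equivalent t) : factorCount M s = factorCount M t := by
  obtain ⟨e, he⟩ := h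
  refine Fintype.sum_equiv e _ _ fun i => ?_
  have f := JordanHolderLattice.Iso.linearEquiv (he i)
  exact if_congr ⟨fun ⟨g⟩ => ⟨f.symm.trans g⟩, fun ⟨g⟩ => ⟨f.trans g⟩⟩ rfl rfl

open Classical in
theorem exists_of_wcovBy_succ [Nontrivial M] (f : ℕ → Submodule R X) (L : ℕ)
    (hf : ∀ i < L, f i ⩿ f (i + 1)) :
    ∃ s : CompositionSeries (Submodule R X), s.head = f 0 ∧ s.last = f L ∧
      factorCount M s =
        ∑ i ∈ Finset.range L,
          if Nonempty (quotSub (f (i + 1)) (f i) ≃ₗ[R] M) then 1 else 0 := by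
  induction L with
  | zero => exact ⟨RelSeries.singleton _ (f 0), rfl, rfl, rfl⟩
  | succ L ih =>
    obtain ⟨s, hhead, hlast, hcount⟩ := ih fun i hi => hf i (hi.trans L.lt_succ_self)
    rw [Finset.sum_range_succ, ← hcount]
    rcases (hf L L.lt_succ_self).eq_or_covBy with heq | hcov
    · refine ⟨s, hhead, hlast.trans heq, ?_⟩
      rw [if_neg (not_nonempty_quotSub_equiv_of_le heq.ge), add_zero]
    · refine ⟨s.snoc (f (L + 1)) (hlast ▸ hcov), by simp [hhead], by simp, ?_⟩
      rw [factorCount_snoc, hlast]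

open Classical in
theorem exists_of_succ_wcovBy [Nontrivial M] (g : ℕ → Submodule R X) (L : ℕ)
    (hg : ∀ i < L, g (i + 1) ⩿ g i) :
    ∃ s : CompositionSeries (Submodule R X), s.head = g L ∧ s.last = g 0 ∧
      factorCount M s =
        ∑ i ∈ Finset.range L,
          if Nonempty (quotSub (g i) (g (i + 1)) ≃ₗ[R] M) then 1 else 0 := by
  obtain ⟨s, hhead, hlast, hcount⟩ := exists_of_wcovBy_succ M (fun i => g (L - i)) L
    fun i hi => by convert hg (L - (i + 1)) (by omega) using 2; omega
  refine ⟨s, by simpa using hhead, by simpa using hlast, hcount.trans ?_⟩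
  rw [← Finset.sum_range_reflect]
  refine Finset.sum_congr rfl fun i hi => ?_
  have hi := Finset.mem_range.1 hi
  rw [show L - (L - 1 - i + 1) = i by omega, show L - (L - 1 - i) = i + 1 by omega]

theorem exists_inf_ncard_of_succ_wcovBy [Nontrivial M] {A : ℕ → Submodule R X}
    (hA0 : A 0 = ⊤) (hA : ∀ i, A (i + 1) ⩿ A i) {W : Submodule R X} {L : ℕ}
    (hL : A L ⊓ W = ⊥)
    (hfac : ∀ i, Nonempty (quotSub (A i) (A (i + 1)) ≃ₗ[R] M) →
      i < L ∧ A i ≤ A (i + 1) ⊔ W) :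
    ∃ s : CompositionSeries (Submodule R X), s.head = ⊥ ∧ s.last = W ∧
      factorCount M s = {i | Nonempty (quotSub (A i) (A (i + 1)) ≃ₗ[R] M)}.ncard := by
  classical
  obtain ⟨s, hhead, hlast, hcount⟩ :=
    exists_of_succ_wcovBy M (fun i => A i ⊓ W) L fun i _ => (hA i).inf_right W
  refine ⟨s, hhead.trans hL, by simpa [hA0] using hlast, hcount.trans ?_⟩
  rw [Set.ncard_setOf_eq_sum_range fun i hi => (hfac i hi).1]
  exact Finset.sum_congr rfl fun i _ =>
    if_congr (nonempty_quotSub_inf_equiv_iff (hA i) fun hi => (hfac i hi).2) rfl rfl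

theorem exists_ncard_of_wcovBy_succ [Nontrivial M] {B : ℕ → Submodule R X}
    (hB0 : B 0 = ⊥) (hB : ∀ i, B i ⩿ B (i + 1)) {n : ℕ}
    (hfac : ∀ i, Nonempty (quotSub (B (i + 1)) (B i) ≃ₗ[R] M) → i < n) :
    ∃ s : CompositionSeries (Submodule R X), s.head = ⊥ ∧ s.last = B n ∧
      factorCount M s = {i | Nonempty (quotSub (B (i + 1)) (B i) ≃ₗ[R] M)}.ncard := by
  classical
  obtain ⟨s, hhead, hlast, hcount⟩ := exists_of_wcovBy_succ M B n fun i _ => hB i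
  exact ⟨s, hhead.trans hB0, hlast, hcount.trans (Set.ncard_setOf_eq_sum_range hfac).symm⟩

end CompositionSeries

theorem statement16_general {R : Type*} [Ring R] {X : Type*} [AddCommGroup X] [Module R X]
    {J : Type*} (S : J → Type*) [∀ j, AddCommGroup (S j)] [∀ j, Module R (S j)]
    (hsimple : ∀ j, IsSimpleModule R (S j))
    (hstable : ∀ A B : Submodule R X, B ≤ A →
      StableDesc R (quotSub A B) ∧ StableAsc R (quotSub A B))
    (A B : ℕ → Submodule R X)
    (hA0 : A 0 = ⊤) (hAdesc : ∀ i, A (i + 1) ≤ A i) (hAinf : (⨅ i, A i) = ⊥)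
    (hB0 : B 0 = ⊥) (hBasc : ∀ i, B i ≤ B (i + 1)) (hBsup : (⨆ i, B i) = ⊤)
    (hAq : ∀ i, Subsingleton (quotSub (A i) (A (i + 1))) ∨
      ∃ j, Nonempty (quotSub (A i) (A (i + 1)) ≃ₗ[R] S j))
    (hBq : ∀ i, Subsingleton (quotSub (B (i + 1)) (B i)) ∨
      ∃ j, Nonempty (quotSub (B (i + 1)) (B i) ≃ₗ[R] S j))
    (hAfin : ∀ j, {i | Nonempty (quotSub (A i) (A (i + 1)) ≃ₗ[R] S j)}.Finite)
    (hBfin : ∀ j, {i | Nonempty (quotSub (B (i + 1)) (B i) ≃ₗ[R] S j)}.Finite) :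
    ∀ j, {i | Nonempty (quotSub (A i) (A (i + 1)) ≃ₗ[R] S j)}.ncard
      = {i | Nonempty (quotSub (B (i + 1)) (B i) ≃ₗ[R] S j)}.ncard := by
  intro j
  have : Nontrivial (S j) := IsSimpleModule.nontrivial R (S j)
  obtain ⟨N, hN⟩ := (hAfin j).bddAbove
  obtain ⟨n₀, hn₀⟩ := (hBfin j).bddAbove
  obtain ⟨m, hm⟩ :=
    exists_sup_eq_top_of_stableAsc hB0 hBasc hBsup (hstable ⊤ (A (N + 1)) le_top).2
  let n := max m (n₀ + 1)
  obtain ⟨I, hI⟩ :=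
    exists_inf_eq_bot_of_stableDesc hA0 hAdesc hAinf (hstable (B n) ⊥ bot_le).1
  have hAanti : Antitone A := antitone_nat_of_succ_le hAdesc
  obtain ⟨sA, hsA_head, hsA_last, hsA⟩ :=
    CompositionSeries.exists_inf_ncard_of_succ_wcovBy (S j) hA0
    (fun i => wcovBy_of_quotSub hsimple (hAdesc i) (hAq i)) (L := max I (N + 1))
    (eq_bot_iff.2 (hI ▸ inf_le_inf_right _ (hAanti (le_max_left _ _))))
    fun i hi => ⟨by have := hN hi; omega, calc
      A i ≤ B m ⊔ A (N + 1) := hm ▸ le_top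
      _ ≤ B n ⊔ A (i + 1) := sup_le_sup (monotone_nat_of_le_succ hBasc (le_max_left _ _))
          (hAanti (Nat.succ_le_succ (hN hi)))
      _ = A (i + 1) ⊔ B n := sup_comm _ _⟩
  obtain ⟨sB, hsB_head, hsB_last, hsB⟩ :=
    CompositionSeries.exists_ncard_of_wcovBy_succ (S j) hB0
    (fun i => wcovBy_of_quotSub hsimple (hBasc i) (hBq i)) (n := n)
    fun i hi => by have := hn₀ hi; omega
  rw [← hsA, ← hsB]
  exact (CompositionSeries.jordan_holder sA sB (hsA_head.trans hsB_head.symm)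
    (hsA_last.trans hsB_last.symm)).factorCount_eq _

/-- Let `X` be an `R`-module such that every subquotient of `X` is stable
for descending and ascending filtrations.  A descending ℤ-composition series and an ascending
ℤ-composition series of `X`, with factors among a family `(S_j)` of pairwise non-isomorphic
simple modules and finite multiplicities, have the same simple factors with the same
multiplicities. -/
theorem statement16 {R : Type*} [Ring R] {X : Type*} [AddCommGroup X] [Module R X]
    {J : Type*} (S : J → Type*) [∀ j, AddCommGroup (S j)] [∀ j, Module R (S j)]
    (hsimple : ∀ j, IsSimpleModule R (S j))
    (hpair : ∀ j j', j ≠ j' → IsEmpty (S j ≃ₗ[R] S j'))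
    (hstable : ∀ A B : Submodule R X, B ≤ A →
      StableDesc R (quotSub A B) ∧ StableAsc R (quotSub A B))
    (A B : ℕ → Submodule R X)
    (hA0 : A 0 = ⊤) (hAdesc : ∀ i, A (i + 1) ≤ A i) (hAinf : (⨅ i, A i) = ⊥)
    (hB0 : B 0 = ⊥) (hBasc : ∀ i, B i ≤ B (i + 1)) (hBsup : (⨆ i, B i) = ⊤)
    (hAq : ∀ i, Subsingleton (quotSub (A i) (A (i + 1))) ∨
      ∃ j, Nonempty (quotSub (A i) (A (i + 1)) ≃ₗ[R] S j))
    (hBq : ∀ i, Subsingleton (quotSub (B (i + 1)) (B i)) ∨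
      ∃ j, Nonempty (quotSub (B (i + 1)) (B i) ≃ₗ[R] S j))
    (hAfin : ∀ j, {i | Nonempty (quotSub (A i) (A (i + 1)) ≃ₗ[R] S j)}.Finite)
    (hBfin : ∀ j, {i | Nonempty (quotSub (B (i + 1)) (B i) ≃ₗ[R] S j)}.Finite) :
    ∀ j, {i | Nonempty (quotSub (A i) (A (i + 1)) ≃ₗ[R] S j)}.ncard
      = {i | Nonempty (quotSub (B (i + 1)) (B i) ≃ₗ[R] S j)}.ncard :=
  statement16_general S hsimple hstable A B hA0 hAdesc hAinf hB0 hBasc hBsup hAq hBq hAfin hBfin
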